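/- arXiv:2502.00891 — 8 statements merged into one kernel-verified Lean document; each statement's English description precedes it below -/
import Mathlib

section
/- Let r > 0 and for real k define K(k) = ( r^2 / sinh^2(r) ) * ( (1+k)(k-2) + (k-1) cosh(r) + 4k/(1+cosh(r)) ). Then for every real k >= 2, K(k) / ( k(k+2) + 1 ) >= min{ K(2)/9 , r^2 / sinh^2(r) }. -/
open Real

/-- The spectral ratio `H(k) = K(k)/(k(k+2)+1)` on `[2, ∞)` is bounded below by the
minimum of its value at `k = 2` and its limit `r²/sinh²r` as `k → ∞`. -/
theorem spectral_ratio_lower_bound (r : ℝ) (hr : 0 < r)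
    (K : ℝ → ℝ)
    (hK : ∀ k : ℝ, K k = (r ^ 2 / Real.sinh r ^ 2)
        * ((1 + k) * (k - 2) + (k - 1) * Real.cosh r + 4 * k / (1 + Real.cosh r))) :
    ∀ k : ℝ, 2 ≤ k →
      K k / (k * (k + 2) + 1) ≥ min (K 2 / 9) (r ^ 2 / Real.sinh r ^ 2) := by
  intro k hk
  have hc : (1:ℝ) ≤ Real.cosh r := Real.one_le_cosh r
  have hsh : 0 < Real.sinh r := Real.sinh_pos_iff.mpr hr
  have hq : 0 < r ^ 2 / Real.sinh r ^ 2 := by positivity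
  set s := r ^ 2 / Real.sinh r ^ 2 with hsdef
  set c := Real.cosh r with hcdef
  have hk1 : (0:ℝ) < k + 1 := by linarith
  have hk3 : (3:ℝ) ≤ k + 1 := by linarith
  have hc1 : (0:ℝ) < 1 + c := by linarith
  have diff : K k / (k * (k + 2) + 1)
      - ((1 - 3/(k+1)) * s + (3/(k+1)) * (K 2 / 9))
      = s * (2*c + 4/(1+c)) * (1/(k+1)) * (1/3 - 1/(k+1)) := by
    rw [hK k, hK 2]
    field_simp
    ring
  have hB : 0 ≤ 2*c + 4/(1+c) := by positivity
  have hu : 0 ≤ 1/(k+1) := by positivity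
  have hu3 : 1/(k+1) ≤ 1/3 := by
    rw [div_le_div_iff₀ hk1 (by norm_num)]
    linarith
  have hfac : 0 ≤ s * (2*c + 4/(1+c)) * (1/(k+1)) * (1/3 - 1/(k+1)) := by
    have := hq.le
    have h13 : 0 ≤ 1/3 - 1/(k+1) := by linarith
    positivity
  have key : K k / (k * (k + 2) + 1)
      ≥ (1 - 3/(k+1)) * s + (3/(k+1)) * (K 2 / 9) := by linarith [diff, hfac]
  have hm1 : min (K 2 / 9) s ≤ K 2 / 9 := min_le_left _ _
  have hm2 : min (K 2 / 9) s ≤ s := min_le_right _ _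
  have hcoef0 : 0 ≤ 3/(k+1) := by positivity
  have hcoef1 : 3/(k+1) ≤ 1 := by
    rw [div_le_one hk1]; linarith
  nlinarith [mul_le_mul_of_nonneg_left hm2 (by linarith : (0:ℝ) ≤ 1 - 3/(k+1)),
    mul_le_mul_of_nonneg_left hm1 hcoef0]
end

section
/- Let r > 0 and for real k > 0 define H(k) = K(k) / ( k(k+2) + 1 ), where K(k) = ( r^2 / sinh^2(r) ) * ( (1+k)(k-2) + (k-1) cosh(r) + 4k/(1+cosh(r)) ). Then H attains its maximum on (0, infinity) at the point k0 = (1/8) * ( 17 + 12 cosh(r) + 3 cosh(2r) ) * csch^4(r/2); that is, H(k) <= H(k0) for all k > 0, and k0 is the unique stationary point of H on (0, infinity). -/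
open Real

set_option maxHeartbeats 1000000 in
/-- The ratio `H(k) = K(k)/(k(k+2)+1)` attains its maximum on `(0, ∞)` at
`k₀ = (17 + 12 cosh r + 3 cosh 2r) csch⁴(r/2) / 8`, which is its unique stationary
point there. -/
theorem spectral_ratio_max (r : ℝ) (hr : 0 < r)
    (K H : ℝ → ℝ)
    (hK : ∀ k : ℝ, K k = (r ^ 2 / Real.sinh r ^ 2)
        * ((1 + k) * (k - 2) + (k - 1) * Real.cosh r + 4 * k / (1 + Real.cosh r)))
    (hH : ∀ k : ℝ, H k = K k / (k * (k + 2) + 1))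
    (k0 : ℝ)
    (hk0 : k0 = (1 / 8) * (17 + 12 * Real.cosh r + 3 * Real.cosh (2 * r))
        * (1 / Real.sinh (r / 2) ^ 4)) :
    (∀ k : ℝ, 0 < k → H k ≤ H k0) ∧
      (∀ k : ℝ, 0 < k → (deriv H k = 0 ↔ k = k0)) := by
  set c : ℝ := Real.cosh r with hc
  have hc1 : 1 < c := Real.one_lt_cosh.mpr (ne_of_gt hr)
  have hcm1 : (0:ℝ) < c - 1 := by linarith
  have hcm1' : (c - 1) ≠ 0 := ne_of_gt hcm1
  have hd : (0:ℝ) < 1 + c := by linarith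
  have hd' : (1 + c) ≠ 0 := ne_of_gt hd
  have hs : Real.sinh r ≠ 0 := ne_of_gt (Real.sinh_pos_iff.mpr hr)
  have hC : (0:ℝ) < r ^ 2 / Real.sinh r ^ 2 := by positivity
  -- half angle
  have hhalf : Real.sinh (r / 2) ^ 2 = (c - 1) / 2 := by
    have h2 : Real.cosh (2 * (r / 2)) = Real.cosh (r / 2) ^ 2 + Real.sinh (r / 2) ^ 2 :=
      Real.cosh_two_mul (r / 2)
    have h3 : Real.cosh (r / 2) ^ 2 = Real.sinh (r / 2) ^ 2 + 1 := Real.cosh_sq (r / 2)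
    have h4 : 2 * (r / 2) = r := by ring
    rw [h4, h3] at h2
    rw [hc, h2]; ring
  have h2r : Real.cosh (2 * r) = 2 * c ^ 2 - 1 := by
    have := Real.cosh_two_mul r
    have h3 := Real.sinh_sq r
    rw [← hc] at this h3
    linarith
  have hk0c : k0 = (3 * c ^ 2 + 6 * c + 7) / (c - 1) ^ 2 := by
    rw [hk0, h2r]
    have : Real.sinh (r / 2) ^ 4 = ((c - 1) / 2) ^ 2 := by
      rw [← hhalf]; ring
    rw [this]
    field_simp
    ring
  have hk0pos : 0 < k0 := by
    rw [hk0c]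
    positivity
  have hQ0 : k0 * (k0 + 2) + 1 = (4 * c ^ 2 + 4 * c + 8) ^ 2 / ((c - 1) ^ 2) ^ 2 := by
    rw [hk0c]; field_simp; ring
  have hB : (4 * c ^ 2 + 4 * c + 8 : ℝ) ≠ 0 := by positivity
  constructor
  · intro k hk
    have hk1 : (k + 1) ≠ 0 := by positivity
    have hQ : k * (k + 2) + 1 ≠ 0 := by positivity
    have key : H k0 - H k = (r ^ 2 / Real.sinh r ^ 2) *
        ((4 * c ^ 2 + 4 * c + 8) - (c - 1) ^ 2 * (k + 1)) ^ 2 /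
        (2 * (4 * c ^ 2 + 4 * c + 8) * (1 + c) * (k + 1) ^ 2) := by
      rw [hH, hH, hK, hK, hQ0, hk0c]
      have hQ' : k * (k + 2) + 1 = (k + 1) ^ 2 := by ring
      rw [hQ']
      field_simp
      ring
    nlinarith [sq_nonneg ((4 * c ^ 2 + 4 * c + 8) - (c - 1) ^ 2 * (k + 1)),
      mul_pos (mul_pos (mul_pos (by positivity : (0:ℝ) < 2 * (4 * c ^ 2 + 4 * c + 8)) hd)
        (by positivity : (0:ℝ) < (k + 1) ^ 2)) hC,
      div_nonneg (mul_nonneg (le_of_lt hC)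
        (sq_nonneg ((4 * c ^ 2 + 4 * c + 8) - (c - 1) ^ 2 * (k + 1))))
        (by positivity : (0:ℝ) ≤ 2 * (4 * c ^ 2 + 4 * c + 8) * (1 + c) * (k + 1) ^ 2)]
  · intro k hk
    have hk1 : (0:ℝ) < k + 1 := by linarith
    have hQpos : (0:ℝ) < k * (k + 2) + 1 := by nlinarith
    have hQ : k * (k + 2) + 1 ≠ 0 := ne_of_gt hQpos
    have hHe : H = fun k => (r ^ 2 / Real.sinh r ^ 2)
        * ((1 + k) * (k - 2) + (k - 1) * c + 4 * k / (1 + c)) / (k * (k + 2) + 1) :=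
      funext fun k => by rw [hH, hK]
    have hNum : HasDerivAt (fun k : ℝ => (r ^ 2 / Real.sinh r ^ 2)
        * ((1 + k) * (k - 2) + (k - 1) * c + 4 * k / (1 + c)))
        ((r ^ 2 / Real.sinh r ^ 2) * ((1 * (k - 2) + (1 + k) * 1) + 1 * c + 4 * 1 / (1 + c))) k := by
      exact ((((hasDerivAt_id k).const_add 1).mul ((hasDerivAt_id k).sub_const 2)).add
        (((hasDerivAt_id k).sub_const 1).mul_const c) |>.add
        (((hasDerivAt_id k).const_mul 4).div_const (1 + c))).const_mul _
    have hDen : HasDerivAt (fun k : ℝ => k * (k + 2) + 1) (1 * (k + 2) + k * 1) k :=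
      ((hasDerivAt_id k).mul ((hasDerivAt_id k).add_const 2)).add_const 1
    have hDer : HasDerivAt H
        (((r ^ 2 / Real.sinh r ^ 2) * ((1 * (k - 2) + (1 + k) * 1) + 1 * c + 4 * 1 / (1 + c))
            * (k * (k + 2) + 1)
          - (r ^ 2 / Real.sinh r ^ 2) * ((1 + k) * (k - 2) + (k - 1) * c + 4 * k / (1 + c))
            * (1 * (k + 2) + k * 1)) / (k * (k + 2) + 1) ^ 2) k := by
      rw [hHe]; exact hNum.div hDen hQ
    have hder : deriv H k = (r ^ 2 / Real.sinh r ^ 2) / ((1 + c) * (k + 1) ^ 3) *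
        ((c - 1) ^ 2 * (k0 - k)) := by
      rw [hDer.deriv, hk0c]
      have hQ' : k * (k + 2) + 1 = (k + 1) ^ 2 := by ring
      rw [hQ']
      field_simp
      ring
    rw [hder]
    have hE : (r ^ 2 / Real.sinh r ^ 2) / ((1 + c) * (k + 1) ^ 3) * (c - 1) ^ 2 ≠ 0 := by
      positivity
    constructor
    · intro h
      have : (r ^ 2 / Real.sinh r ^ 2) / ((1 + c) * (k + 1) ^ 3) * (c - 1) ^ 2 * (k0 - k) = 0 := by
        rw [← h]; ring
      have := (mul_eq_zero.mp this).resolve_left hE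
      linarith
    · intro h
      rw [h]; ring
end

section
/- The function c(r) = r (1 + 2 cosh(r)) / (2 sinh(r)) is strictly increasing on (0, infinity). -/
open Real

lemma c_key (x : ℝ) (hx : 0 < x) :
    0 < Real.sinh x + 2 * (Real.sinh x * Real.cosh x) - x * Real.cosh x - 2 * x := by
  set N : ℝ → ℝ := fun x => Real.sinh x + 2 * (Real.sinh x * Real.cosh x)
      - x * Real.cosh x - 2 * x with hN
  have hder : ∀ y : ℝ, HasDerivAt N
      (Real.cosh y + 2 * (Real.cosh y * Real.cosh y + Real.sinh y * Real.sinh y)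
        - (1 * Real.cosh y + y * Real.sinh y) - 2 * 1) y := by
    intro y
    have h1 := Real.hasDerivAt_sinh y
    have h2 := Real.hasDerivAt_cosh y
    exact ((h1.add ((h1.mul h2).const_mul 2)).sub ((hasDerivAt_id y).mul h2)).sub
      ((hasDerivAt_id y).const_mul 2)
  have hmono : StrictMonoOn N (Set.Ici 0) := by
    apply strictMonoOn_of_deriv_pos (convex_Ici 0)
    · intro y _
      exact (hder y).differentiableAt.continuousAt.continuousWithinAt
    · intro y hy
      rw [interior_Ici] at hy
      rw [(hder y).deriv]
      have hs : 0 < Real.sinh y := Real.sinh_pos_iff.mpr hy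
      have hlt : y < Real.sinh y := Real.self_lt_sinh_iff.mpr hy
      nlinarith [Real.cosh_sq y, sq_nonneg (Real.sinh y)]
  have h0 : N 0 = 0 := by simp [hN]
  have := hmono (by simp : (0:ℝ) ∈ Set.Ici 0) (le_of_lt hx) hx
  rw [h0] at this
  exact this

/-- The function `c(r) = r(1 + 2 cosh r)/(2 sinh r)` is strictly increasing on `(0, ∞)`. -/
theorem c_strictMonoOn :
    StrictMonoOn (fun r : ℝ => r * (1 + 2 * Real.cosh r) / (2 * Real.sinh r))
      (Set.Ioi (0 : ℝ)) := by
  have hder : ∀ x : ℝ, 0 < x →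
      HasDerivAt (fun r : ℝ => r * (1 + 2 * Real.cosh r) / (2 * Real.sinh r))
        (((1 * (1 + 2 * Real.cosh x) + x * (2 * Real.sinh x)) * (2 * Real.sinh x)
          - x * (1 + 2 * Real.cosh x) * (2 * Real.cosh x)) / (2 * Real.sinh x) ^ 2) x := by
    intro x hx
    have hs : 0 < Real.sinh x := Real.sinh_pos_iff.mpr hx
    have hnum : HasDerivAt (fun r : ℝ => r * (1 + 2 * Real.cosh r))
        (1 * (1 + 2 * Real.cosh x) + x * (2 * Real.sinh x)) x :=
      (hasDerivAt_id x).mul (((Real.hasDerivAt_cosh x).const_mul 2).const_add 1)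
    have hden : HasDerivAt (fun r : ℝ => 2 * Real.sinh r) (2 * Real.cosh x) x :=
      (Real.hasDerivAt_sinh x).const_mul 2
    exact hnum.div hden (by positivity)
  apply strictMonoOn_of_deriv_pos (convex_Ioi 0)
  · intro x hx
    exact (hder x hx).differentiableAt.continuousAt.continuousWithinAt
  · intro x hx
    rw [interior_Ioi] at hx
    rw [(hder x hx).deriv]
    have hs : 0 < Real.sinh x := Real.sinh_pos_iff.mpr hx
    apply div_pos
    · have hk := c_key x hx
      have hc : Real.cosh x ^ 2 = Real.sinh x ^ 2 + 1 := Real.cosh_sq x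
      have hexp : (1 * (1 + 2 * Real.cosh x) + x * (2 * Real.sinh x)) * (2 * Real.sinh x)
          - x * (1 + 2 * Real.cosh x) * (2 * Real.cosh x)
          = 2 * (Real.sinh x + 2 * (Real.sinh x * Real.cosh x) - x * Real.cosh x - 2 * x)
            + 4 * x * (Real.sinh x ^ 2 + 1 - Real.cosh x ^ 2) := by ring
      rw [hexp, hc]
      ring_nf
      linarith
    · positivity
end

section
/- For every real s >= 1, (1 + 2s) * sqrt(s^2 - 1) >= (2 + s) * arcosh(s), where arcosh is the inverse hyperbolic cosine. -/
open Real

/-!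
With `t = arcosh s ≥ 0` we have `sinh t = √(s² - 1)` and `t ≤ sinh t`, so `arcosh s ≤ √(s² - 1)`;
since `2 + s ≤ 1 + 2s` for `s ≥ 1`, the inequality follows.
-/

/-- The inverse hyperbolic cosine (for `s ≥ 1`). -/
noncomputable def arcosh (s : ℝ) : ℝ := Real.log (s + Real.sqrt (s ^ 2 - 1))

theorem arcosh_eq_real_arcosh (s : ℝ) : _root_.arcosh s = Real.arcosh s := rfl

theorem Real.arcosh_le_sqrt_sq_sub_one {s : ℝ} (hs : 1 ≤ s) : Real.arcosh s ≤ √(s ^ 2 - 1) :=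
  sinh_arcosh hs ▸ self_le_sinh_iff.mpr (arcosh_nonneg hs)

/-- For every `s ≥ 1`, `(1 + 2s)√(s² - 1) ≥ (2 + s) arcosh s`. -/
theorem arcosh_inequality (s : ℝ) (hs : 1 ≤ s) :
    (1 + 2 * s) * Real.sqrt (s ^ 2 - 1) ≥ (2 + s) * _root_.arcosh s := by
  rw [arcosh_eq_real_arcosh]
  calc (2 + s) * Real.arcosh s ≤ (2 + s) * √(s ^ 2 - 1) :=
        mul_le_mul_of_nonneg_left (arcosh_le_sqrt_sq_sub_one hs) (by linarith)
    _ ≤ (1 + 2 * s) * √(s ^ 2 - 1) :=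
        mul_le_mul_of_nonneg_right (by linarith) (sqrt_nonneg _)
end

section
/- Let n >= 1 be an integer and rho > 0. Define phi(v) = (1+v) * sinh^{2n}( rho (1+v) / 2 ) for v > -1. Then for every u in [-1/2, 1/2], the second derivative satisfies phi''(u) <= phi''(1). -/
/-!
Writing `φ(v) = ψ(1 + v)` with `ψ(t) = t g(t)` and `g(t) = sinh(ρt/2)^(2n)`, we get
`ψ'' = 2g' + t g''`. Both `g'` and `g''` are sums of products of powers of `sinh(ρt/2)` and
`cosh(ρt/2)` with nonnegative coefficients, and these are nonnegative and nondecreasing for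
`t ≥ 0`. Hence `ψ''` is nondecreasing on `[0, ∞)`, i.e. `φ''` is nondecreasing on `[-1, ∞)`.
-/

open Real

section
variable {𝕜 : Type*} [NontriviallyNormedField 𝕜]

theorem iteratedDeriv_two_eq_of_hasDerivAt {f f' f'' : 𝕜 → 𝕜}
    (hf : ∀ x, HasDerivAt f (f' x) x) (hf' : ∀ x, HasDerivAt f' (f'' x) x) :
    iteratedDeriv 2 f = f'' := by
  rw [iteratedDeriv_succ, iteratedDeriv_one, funext fun x => (hf x).deriv,
    funext fun x => (hf' x).deriv]

theorem iteratedDeriv_two_id_mul {g g' g'' : 𝕜 → 𝕜}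
    (hg : ∀ x, HasDerivAt g (g' x) x) (hg' : ∀ x, HasDerivAt g' (g'' x) x) :
    iteratedDeriv 2 (fun x => x * g x) = fun x => 2 * g' x + x * g'' x :=
  iteratedDeriv_two_eq_of_hasDerivAt (f' := fun x => g x + x * g' x)
    (fun x => ((hasDerivAt_id' x).fun_mul (hg x)).congr_deriv (by ring))
    (fun x => ((hg x).fun_add ((hasDerivAt_id' x).fun_mul (hg' x))).congr_deriv (by ring))

end

theorem hasDerivAt_sinh_mul_pow (a t : ℝ) (k : ℕ) :
    HasDerivAt (fun t => sinh (a * t) ^ k) (k * a * sinh (a * t) ^ (k - 1) * cosh (a * t)) t :=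
  (((hasDerivAt_id' t).const_mul a).sinh.fun_pow k).congr_deriv (by ring)

theorem hasDerivAt_sinh_mul_pow_mul_cosh (a t : ℝ) (k : ℕ) :
    HasDerivAt (fun t => sinh (a * t) ^ k * cosh (a * t))
      (a * (k * sinh (a * t) ^ (k - 1) * cosh (a * t) ^ 2 + sinh (a * t) ^ k * sinh (a * t))) t :=
  ((hasDerivAt_sinh_mul_pow a t k).fun_mul ((hasDerivAt_id' t).const_mul a).cosh).congr_deriv
    (by ring)

theorem monotoneOn_iteratedDeriv_two_mul_sinh_mul_pow {a : ℝ} (ha : 0 ≤ a) (k : ℕ) :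
    MonotoneOn (iteratedDeriv 2 fun t => t * sinh (a * t) ^ k) (Set.Ici 0) := by
  have hg' : ∀ t, HasDerivAt (fun t => k * a * sinh (a * t) ^ (k - 1) * cosh (a * t))
      (k * a * (a * ((k - 1 : ℕ) * sinh (a * t) ^ (k - 1 - 1) * cosh (a * t) ^ 2
        + sinh (a * t) ^ (k - 1) * sinh (a * t)))) t := fun t => by
    simpa only [mul_assoc] using (hasDerivAt_sinh_mul_pow_mul_cosh a t (k - 1)).const_mul (k * a)
  rw [iteratedDeriv_two_id_mul (hasDerivAt_sinh_mul_pow a · k) hg']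
  intro s (hs : 0 ≤ s) t (ht : 0 ≤ t) hst
  have hsinh : sinh (a * s) ≤ sinh (a * t) := sinh_le_sinh.mpr (by gcongr)
  have hcosh : cosh (a * s) ≤ cosh (a * t) :=
    cosh_strictMonoOn.monotoneOn (Set.mem_Ici.mpr (by positivity))
      (Set.mem_Ici.mpr (by positivity)) (by gcongr)
  dsimp only
  gcongr

theorem phi_second_deriv_bound_general (n : ℕ) (ρ : ℝ) (hρ : 0 < ρ)
    (φ : ℝ → ℝ) (hφ : ∀ v : ℝ, φ v = (1 + v) * Real.sinh (ρ * (1 + v) / 2) ^ (2 * n)) :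
    ∀ u : ℝ, -(1/2) ≤ u → u ≤ 1/2 →
      iteratedDeriv 2 φ u ≤ iteratedDeriv 2 φ 1 := by
  intro u hu₁ hu₂
  let ψ : ℝ → ℝ := fun t => t * sinh (ρ / 2 * t) ^ (2 * n)
  have hφ_shift : φ = fun v => ψ (1 + v) := funext fun v => by rw [hφ, mul_div_right_comm]
  rw [hφ_shift, iteratedDeriv_comp_const_add]
  exact monotoneOn_iteratedDeriv_two_mul_sinh_mul_pow (by positivity) (2 * n)
    (Set.mem_Ici.mpr (by linarith)) (Set.mem_Ici.mpr (by norm_num)) (by linarith)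

/-- For `φ(v) = (1+v) sinh^{2n}(ρ(1+v)/2)`, the second derivative satisfies
`φ''(u) ≤ φ''(1)` for all `u ∈ [-1/2, 1/2]`. -/
theorem phi_second_deriv_bound (n : ℕ) (hn : 1 ≤ n) (ρ : ℝ) (hρ : 0 < ρ)
    (φ : ℝ → ℝ) (hφ : ∀ v : ℝ, φ v = (1 + v) * Real.sinh (ρ * (1 + v) / 2) ^ (2 * n)) :
    ∀ u : ℝ, -(1/2) ≤ u → u ≤ 1/2 →
      iteratedDeriv 2 φ u ≤ iteratedDeriv 2 φ 1 :=
  phi_second_deriv_bound_general n ρ hρ φ hφ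
end

section
/- Let n >= 1 be an integer and r0 > 0. There exists a constant C >= 0, depending only on n and r0, such that for every r in (0, r0] and every measurable function u : S -> R with |u(w)| <= 1/2 for all w in S, if the vector-valued barycenter constraint Int_S w * (1+u(w)) * ( Int_0^r sinh^{2n}( rho(1+u(w))/2 ) d rho ) dH(w) = 0 (an identity in R^{2n}) holds, then || Int_S u(w) * w dH(w) || <= C * Int_S u^2 dH. -/
/-!
The substitution `s = ρ (1 + u)` turns the constraint into `∫_S G(r (1 + u(w))) w dH = 0` with
`G x = ∫₀ˣ sinh (s/2)^{2n} ds`. Since `∫_S w dH = 0` by the symmetry `w ↦ -w`, expanding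
`G(r (1 + u)) = G r + r G'(r) u + O(u²)` leaves `r G'(r) ∫_S u w dH = O(∫_S u² dH)`, and the
ratio of the remainder constant to `r G'(r) = r sinh (r/2)^{2n}` stays bounded for `r ≤ r0`.
All integrals make sense because `H(S) < ∞`: inversion about a point `e` of the sphere maps a
bounded piece of the hyperplane `e^⊥` onto the part of the sphere away from `e`, and is
2-Lipschitz there.
-/

open MeasureTheory Real Metric Set EuclideanGeometry Module AffineSubspace
open scoped RealInnerProductSpace

section

variable {E : Type*} [NormedAddCommGroup E] [NormedSpace ℝ E] [MeasurableSpace E] [BorelSpace E]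

theorem hausdorffMeasure_submodule_inter_closedBall_lt_top (K : Submodule ℝ E)
    [FiniteDimensional ℝ K] (R : ℝ) : μH[finrank ℝ K] ((K : Set E) ∩ closedBall 0 R) < ⊤ := by
  have hball : (K : Set E) ∩ closedBall 0 R = (↑) '' closedBall (0 : K) R := by
    ext x
    simp [and_comm]
  rw [hball, isometry_subtype_coe.hausdorffMeasure_image (Or.inl (Nat.cast_nonneg _))]
  exact measure_closedBall_lt_top

theorem integral_sphere_id_eq_zero (d R : ℝ) : ∫ w in sphere (0 : E) R, w ∂μH[d] = 0 := by
  have : (μH[d].restrict (sphere (0 : E) R)).IsNegInvariant := by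
    refine ⟨?_⟩
    have hmap : Measure.map Neg.neg μH[d] = (μH[d] : Measure E) :=
      (IsometryEquiv.neg E).map_hausdorffMeasure d
    conv_rhs => rw [← hmap, Measure.restrict_map measurable_neg isClosed_sphere.measurableSet]
    simp [Measure.neg]
  have h := integral_neg_eq_self (fun w : E => w) (μH[d].restrict (sphere (0 : E) R))
  rw [integral_neg] at h
  have h2 : (2 : ℝ) • ∫ w in sphere (0 : E) R, w ∂μH[d] = 0 := by
    rw [two_smul]; nth_rewrite 1 [← h]; exact neg_add_cancel _
  exact (smul_eq_zero.mp h2).resolve_left two_ne_zero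

end

section SphereMeasure

variable {E : Type*} [NormedAddCommGroup E] [InnerProductSpace ℝ E]

theorem perpBisector_self_neg (e : E) : (perpBisector e (-e) : Set E) = (ℝ ∙ e)ᗮ := by
  ext x
  rw [SetLike.mem_coe, SetLike.mem_coe, mem_perpBisector_iff_inner_eq_zero,
    Submodule.mem_orthogonal_singleton_iff_inner_left, midpoint_self_neg, vsub_eq_sub, vsub_eq_sub,
    sub_zero, show -e - e = (-2 : ℝ) • e by module, inner_smul_right]
  simp

theorem inversion_mem_orthogonal_of_mem_sphere {e w : E} (he : ‖e‖ = 1)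
    (hw : w ∈ sphere (0 : E) 1) (hwe : w ≠ e) : inversion e √2 w ∈ (ℝ ∙ e)ᗮ := by
  have hR : √2 ≠ 0 := by positivity
  have h0e : (0 : E) ≠ e := by rintro rfl; simp at he
  have hinv0 : inversion e √2 0 = -e := by
    rw [inversion, dist_comm, dist_zero_right, he, div_one, sq_sqrt zero_le_two, vsub_eq_sub,
      vadd_eq_add]
    module
  have himage := image_inversion_sphere_dist_center hR h0e
  rw [dist_zero_left, he, hinv0, perpBisector_self_neg] at himage
  have : inversion e √2 w ∈ insert e ((ℝ ∙ e)ᗮ : Set E) := himage ▸ mem_image_of_mem _ hw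
  exact this.resolve_left ((inversion_eq_center hR).not.mpr hwe)

theorem one_le_dist_of_mem_orthogonal {e x : E} (he : ‖e‖ = 1) (hx : x ∈ (ℝ ∙ e)ᗮ) :
    1 ≤ dist x e := by
  have h : ⟪x, e⟫ = 0 := Submodule.mem_orthogonal_singleton_iff_inner_left.mp hx
  have : dist x e ^ 2 = ‖x‖ ^ 2 + 1 := by rw [dist_eq_norm, norm_sub_sq_real, h, he]; ring
  nlinarith [dist_nonneg (x := x) (y := e), sq_nonneg ‖x‖]

theorem lipschitzOnWith_inversion_orthogonal {e : E} (he : ‖e‖ = 1) :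
    LipschitzOnWith 2 (inversion e √2) ((ℝ ∙ e)ᗮ : Set E) := by
  refine LipschitzOnWith.of_dist_le_mul fun x hx y hy => ?_
  have hxe := one_le_dist_of_mem_orthogonal he hx
  have hye := one_le_dist_of_mem_orthogonal he hy
  rw [dist_inversion_inversion (dist_pos.mp (by linarith)) (dist_pos.mp (by linarith)),
    sq_sqrt zero_le_two, NNReal.coe_ofNat]
  gcongr
  calc 2 / (dist x e * dist y e) ≤ 2 / 1 := by gcongr; nlinarith
    _ = 2 := div_one 2

theorem sphere_inter_subset_image_inversion {e : E} (he : ‖e‖ = 1) :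
    {w ∈ sphere (0 : E) 1 | 1 ≤ dist w e} ⊆
      inversion e √2 '' ((ℝ ∙ e)ᗮ ∩ closedBall 0 3) := by
  rintro w ⟨hw, hwe⟩
  refine ⟨inversion e √2 w, ⟨inversion_mem_orthogonal_of_mem_sphere he hw
    (dist_pos.mp (by linarith)), ?_⟩, inversion_inversion e (by positivity) w⟩
  have hdist : dist (inversion e √2 w) e ≤ 2 := by
    rw [dist_inversion_center, sq_sqrt zero_le_two]
    exact div_le_self zero_le_two hwe
  rw [mem_closedBall_zero_iff]
  calc ‖inversion e √2 w‖ ≤ dist (inversion e √2 w) e + ‖e‖ := by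
        rw [dist_eq_norm]; exact norm_le_norm_sub_add _ _
    _ ≤ 3 := by rw [he]; linarith

variable [MeasurableSpace E] [BorelSpace E] [FiniteDimensional ℝ E]

theorem hausdorffMeasure_sphere_inter_lt_top {e : E} (he : ‖e‖ = 1) :
    μH[(finrank ℝ E : ℝ) - 1] {w ∈ sphere (0 : E) 1 | 1 ≤ dist w e} < ⊤ := by
  have hdim : (finrank ℝ E : ℝ) - 1 = finrank ℝ (ℝ ∙ e)ᗮ := by
    rw [← (ℝ ∙ e).finrank_add_finrank_orthogonal,
      finrank_span_singleton (by simp [← norm_ne_zero_iff, he])]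
    push_cast; ring
  rw [hdim]
  refine (measure_mono (sphere_inter_subset_image_inversion he)).trans_lt ?_
  refine ((lipschitzOnWith_inversion_orthogonal he).mono inter_subset_left
    |>.hausdorffMeasure_image_le (Nat.cast_nonneg _)).trans_lt ?_
  exact ENNReal.mul_lt_top (by simp) (hausdorffMeasure_submodule_inter_closedBall_lt_top _ 3)

theorem hausdorffMeasure_sphere_lt_top :
    μH[(finrank ℝ E : ℝ) - 1] (sphere (0 : E) 1) < ⊤ := by
  rcases (sphere (0 : E) 1).eq_empty_or_nonempty with h | ⟨e, he⟩
  · simp [h]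
  rw [mem_sphere_zero_iff_norm] at he
  have hcover : sphere (0 : E) 1 ⊆
      {w ∈ sphere (0 : E) 1 | 1 ≤ dist w e} ∪ {w ∈ sphere (0 : E) 1 | 1 ≤ dist w (-e)} := by
    intro w hw
    have htri : dist e (-e) ≤ dist w e + dist w (-e) := dist_triangle_left _ _ _
    have h2 : dist e (-e) = 2 := by
      rw [dist_eq_norm, sub_neg_eq_add, ← two_smul ℝ e, norm_smul, he]; norm_num
    rcases le_total 1 (dist w e) with h | h
    · exact Or.inl ⟨hw, h⟩
    · exact Or.inr ⟨hw, by linarith⟩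
  refine (measure_mono hcover).trans_lt ((measure_union_le _ _).trans_lt ?_)
  exact ENNReal.add_lt_top.mpr ⟨hausdorffMeasure_sphere_inter_lt_top he,
    hausdorffMeasure_sphere_inter_lt_top (by rwa [norm_neg])⟩

end SphereMeasure

theorem abs_mul_norm_integral_smul_le {X E : Type*} [MeasurableSpace X] {μ : Measure X}
    [IsFiniteMeasure μ] [NormedAddCommGroup E] [NormedSpace ℝ E]
    {φ : X → E} {u : X → ℝ} {F : ℝ → ℝ} {c M δ : ℝ}
    (hφ : AEStronglyMeasurable φ μ) (hφ_le : ∀ᵐ x ∂μ, ‖φ x‖ ≤ 1) (hφ_mean : ∫ x, φ x ∂μ = 0)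
    (hu : Measurable u) (hu_le : ∀ᵐ x ∂μ, |u x| ≤ δ) (hF : Measurable F)
    (hF_taylor : ∀ t, |t| ≤ δ → |F t - F 0 - c * t| ≤ M * t ^ 2)
    (h : ∫ x, F (u x) • φ x ∂μ = 0) :
    |c| * ‖∫ x, u x • φ x ∂μ‖ ≤ M * ∫ x, u x ^ 2 ∂μ := by
  set g : X → ℝ := fun x => F (u x) - F 0 - c * u x
  have hg : ∀ᵐ x ∂μ, |g x| ≤ M * u x ^ 2 := hu_le.mono fun x hx => hF_taylor _ hx
  have hu_sq : ∀ᵐ x ∂μ, u x ^ 2 ≤ δ ^ 2 := hu_le.mono fun x hx =>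
    sq_abs (u x) ▸ pow_le_pow_left₀ (abs_nonneg _) hx 2
  have hφ_int : Integrable φ μ := .of_bound hφ 1 hφ_le
  have huφ_int : Integrable (fun x => u x • φ x) μ :=
    hφ_int.bdd_smul δ hu.aestronglyMeasurable (by simpa only [Real.norm_eq_abs] using hu_le)
  have hgφ_int : Integrable (fun x => g x • φ x) μ := by
    refine hφ_int.bdd_smul (|M| * δ ^ 2) (by fun_prop) ?_
    filter_upwards [hg, hu_sq] with x hgx hux
    rw [Real.norm_eq_abs]
    nlinarith [le_abs_self M, abs_nonneg M, sq_nonneg (u x)]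
  have hu2_int : Integrable (fun x => u x ^ 2) μ :=
    .of_bound (by fun_prop) (δ ^ 2) (by
      filter_upwards [hu_sq] with x hx; rwa [Real.norm_eq_abs, abs_sq])
  have hsplit : ∫ x, F (u x) • φ x ∂μ = c • ∫ x, u x • φ x ∂μ + ∫ x, g x • φ x ∂μ := by
    have hpt : (fun x => F (u x) • φ x)
        = fun x => F 0 • φ x + c • (u x • φ x) + g x • φ x := by
      funext x; simp only [g, smul_smul, ← add_smul]; congr 1; ring
    have h0 : Integrable (fun x => F 0 • φ x) μ := hφ_int.smul (F 0)
    have h1 : Integrable (fun x => c • (u x • φ x)) μ := huφ_int.smul c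
    have h01 : Integrable (fun x => F 0 • φ x + c • (u x • φ x)) μ := h0.add h1
    rw [hpt, integral_add h01 hgφ_int, integral_add h0 h1, integral_smul, integral_smul,
      hφ_mean, smul_zero, zero_add]
  calc |c| * ‖∫ x, u x • φ x ∂μ‖ = ‖∫ x, g x • φ x ∂μ‖ := by
        rw [← Real.norm_eq_abs, ← norm_smul, eq_neg_of_add_eq_zero_left (hsplit.symm.trans h),
          norm_neg]
    _ ≤ ∫ x, ‖g x • φ x‖ ∂μ := norm_integral_le_integral_norm _
    _ ≤ ∫ x, M * u x ^ 2 ∂μ := by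
        refine integral_mono_ae hgφ_int.norm (hu2_int.const_mul M) ?_
        filter_upwards [hg, hφ_le] with x hgx hφx
        rw [norm_smul, Real.norm_eq_abs]
        exact (mul_le_of_le_one_right (abs_nonneg _) hφx).trans hgx
    _ = M * ∫ x, u x ^ 2 ∂μ := integral_const_mul M _

theorem abs_sub_sub_deriv_mul_le {f f' : ℝ → ℝ} {a b K : ℝ}
    (hf : ∀ x ∈ uIcc a b, HasDerivAt f (f' x) x)
    (hf' : ∀ x ∈ uIcc a b, |f' x - f' a| ≤ K * |x - a|) :
    |f b - f a - f' a * (b - a)| ≤ K * (b - a) ^ 2 := by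
  rcases eq_or_ne a b with rfl | hab
  · simp
  have hK : 0 ≤ K := nonneg_of_mul_nonneg_left ((abs_nonneg _).trans (hf' b right_mem_uIcc))
    (abs_pos.mpr (sub_ne_zero.mpr hab.symm))
  have hderiv : ∀ x ∈ uIcc a b,
      HasDerivWithinAt (fun y => f y - y * f' a) (f' x - f' a) (uIcc a b) x := fun x hx =>
    ((hf x hx).sub (hasDerivAt_mul_const (f' a))).hasDerivWithinAt
  have hbound : ∀ x ∈ uIcc a b, ‖f' x - f' a‖ ≤ K * |b - a| := fun x hx =>
    (hf' x hx).trans (mul_le_mul_of_nonneg_left (abs_sub_left_of_mem_uIcc hx) hK)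
  calc |f b - f a - f' a * (b - a)| = ‖(f b - b * f' a) - (f a - a * f' a)‖ := by
        rw [Real.norm_eq_abs]; ring_nf
    _ ≤ K * |b - a| * ‖b - a‖ := (convex_uIcc a b).norm_image_sub_le_of_norm_hasDerivWithin_le
        hderiv hbound left_mem_uIcc right_mem_uIcc
    _ = K * (b - a) ^ 2 := by rw [Real.norm_eq_abs, mul_assoc, abs_mul_abs_self, sq]

theorem abs_sinh_pow_sub_sinh_pow_le (N : ℕ) {R a b : ℝ} (ha : a ∈ Icc 0 R) (hb : b ∈ Icc 0 R) :
    |sinh a ^ N - sinh b ^ N| ≤ N * sinh R ^ (N - 1) * cosh R * |a - b| := by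
  have hderiv : ∀ x ∈ Icc 0 R,
      HasDerivWithinAt (fun y => sinh y ^ N) (N * sinh x ^ (N - 1) * cosh x) (Icc 0 R) x :=
    fun x _ => ((hasDerivAt_sinh x).pow N).hasDerivWithinAt
  have hbound : ∀ x ∈ Icc 0 R, ‖N * sinh x ^ (N - 1) * cosh x‖ ≤ N * sinh R ^ (N - 1) * cosh R := by
    intro x ⟨hx0, hxR⟩
    have hsinh : 0 ≤ sinh x := sinh_nonneg_iff.mpr hx0
    rw [Real.norm_eq_abs, abs_of_nonneg (by positivity)]
    gcongr
    · exact mul_nonneg (Nat.cast_nonneg _) (pow_nonneg (hsinh.trans (sinh_le_sinh.mpr hxR)) _)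
    · exact sinh_le_sinh.mpr hxR
    · exact cosh_le_cosh.mpr (abs_le_abs_of_nonneg hx0 hxR)
  simpa only [Real.norm_eq_abs] using
    (convex_Icc 0 R).norm_image_sub_le_of_norm_hasDerivWithin_le hderiv hbound hb ha

theorem hasDerivAt_integral_sinh_pow (N : ℕ) (x : ℝ) :
    HasDerivAt (fun y => ∫ s in 0..y, sinh (s / 2) ^ N) (sinh (x / 2) ^ N) x :=
  ((continuous_sinh.comp (continuous_id.div_const 2)).pow N).integral_hasStrictDerivAt 0 x
    |>.hasDerivAt

theorem mul_integral_sinh_pow_mul (N : ℕ) (r a : ℝ) :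
    a * ∫ ρ in 0..r, sinh (ρ * a / 2) ^ N = ∫ s in 0..r * a, sinh (s / 2) ^ N := by
  simpa using intervalIntegral.mul_integral_comp_mul_right (a := 0) (b := r)
    (f := fun s => sinh (s / 2) ^ N) a

theorem abs_integral_sinh_pow_sub_le (N : ℕ) {r t : ℝ} (hr : 0 ≤ r) (ht : |t| ≤ 1 / 2) :
    |(∫ s in 0..r * (1 + t), sinh (s / 2) ^ N) - (∫ s in 0..r, sinh (s / 2) ^ N)
        - r * sinh (r / 2) ^ N * t|
      ≤ N * sinh r ^ (N - 1) * cosh r / 2 * r ^ 2 * t ^ 2 := by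
  have ht' := abs_le.mp ht
  have key := abs_sub_sub_deriv_mul_le (f := fun y => ∫ s in 0..y, sinh (s / 2) ^ N)
    (a := r) (b := r * (1 + t)) (K := N * sinh r ^ (N - 1) * cosh r / 2)
    (fun x _ => hasDerivAt_integral_sinh_pow N x) (fun x hx => ?_)
  · rw [show r * (1 + t) - r = r * t by ring] at key
    exact (congrArg abs (by ring)).trans_le (key.trans_eq (by ring))
  have hx : x ∈ Icc (r / 2) (3 * r / 2) := by
    rcases le_total r (r * (1 + t)) with h | h
    · rw [uIcc_of_le h] at hx; constructor <;> nlinarith [hx.1, hx.2]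
    · rw [uIcc_of_ge h] at hx; constructor <;> nlinarith [hx.1, hx.2]
  calc |sinh (x / 2) ^ N - sinh (r / 2) ^ N|
      ≤ N * sinh r ^ (N - 1) * cosh r * |x / 2 - r / 2| :=
        abs_sinh_pow_sub_sinh_pow_le N ⟨by linarith [hx.1], by linarith [hx.2]⟩
          ⟨by linarith, by linarith⟩
    _ = N * sinh r ^ (N - 1) * cosh r / 2 * |x - r| := by
        rw [← sub_div, abs_div, abs_two]; ring

theorem sinh_pow_mul_cosh_mul_sq_le (N : ℕ) {r r0 : ℝ} (hr : 0 < r) (hrr0 : r ≤ r0) :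
    N * sinh r ^ (N - 1) * cosh r / 2 * r ^ 2
      ≤ N * (2 * cosh r0) ^ N / 2 * (r * sinh (r / 2) ^ N) := by
  obtain _ | N := N
  · simp
  have hs : 0 ≤ sinh (r / 2) := sinh_nonneg_iff.mpr (by linarith)
  have hcosh : ∀ x, 0 ≤ x → x ≤ r → cosh x ≤ cosh r0 := fun x hx hxr =>
    cosh_le_cosh.mpr (abs_le_abs_of_nonneg hx (hxr.trans hrr0))
  have hr_le : r ≤ 2 * sinh (r / 2) := by linarith [self_le_sinh_iff.mpr (by linarith : 0 ≤ r / 2)]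
  have hsinh : sinh r ≤ 2 * sinh (r / 2) * cosh r0 := by
    rw [show r = 2 * (r / 2) by ring, sinh_two_mul, show 2 * (r / 2) = r by ring]
    gcongr
    exact hcosh _ (by linarith) (by linarith)
  calc (↑(N + 1) : ℝ) * sinh r ^ (N + 1 - 1) * cosh r / 2 * r ^ 2
      ≤ (N + 1) * (2 * sinh (r / 2) * cosh r0) ^ N * cosh r0 / 2 * (r * (2 * sinh (r / 2))) := by
        rw [Nat.add_sub_cancel, sq]; push_cast
        gcongr
        exact hcosh r hr.le le_rfl
    _ = (↑(N + 1) : ℝ) * (2 * cosh r0) ^ (N + 1) / 2 * (r * sinh (r / 2) ^ (N + 1)) := by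
        push_cast; ring

theorem abs_integral_sinh_pow_sub_le_mul (N : ℕ) {r r0 t : ℝ} (hr : 0 < r) (hrr0 : r ≤ r0)
    (ht : |t| ≤ 1 / 2) :
    |(∫ s in 0..r * (1 + t), sinh (s / 2) ^ N) - (∫ s in 0..r, sinh (s / 2) ^ N)
        - r * sinh (r / 2) ^ N * t|
      ≤ N * (2 * cosh r0) ^ N / 2 * (r * sinh (r / 2) ^ N) * t ^ 2 :=
  (abs_integral_sinh_pow_sub_le N hr.le ht).trans
    (mul_le_mul_of_nonneg_right (sinh_pow_mul_cosh_mul_sq_le N hr hrr0) (sq_nonneg t))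

theorem barycenter_constraint_bound_general (n : ℕ) (r0 : ℝ) :
    ∃ C : ℝ, 0 ≤ C ∧
      ∀ r : ℝ, 0 < r → r ≤ r0 →
      ∀ u : EuclideanSpace ℝ (Fin (2 * n)) → ℝ,
        Measurable u →
        (∀ w ∈ Metric.sphere (0 : EuclideanSpace ℝ (Fin (2 * n))) 1, |u w| ≤ 1 / 2) →
        (∫ w in Metric.sphere (0 : EuclideanSpace ℝ (Fin (2 * n))) 1,
            ((1 + u w) * ∫ ρ in (0:ℝ)..r, Real.sinh (ρ * (1 + u w) / 2) ^ (2 * n)) • w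
            ∂μH[2 * (n : ℝ) - 1]
          = (0 : EuclideanSpace ℝ (Fin (2 * n)))) →
        ‖∫ w in Metric.sphere (0 : EuclideanSpace ℝ (Fin (2 * n))) 1, u w • w
            ∂μH[2 * (n : ℝ) - 1]‖
          ≤ C * ∫ w in Metric.sphere (0 : EuclideanSpace ℝ (Fin (2 * n))) 1, (u w) ^ 2
              ∂μH[2 * (n : ℝ) - 1] := by
  refine ⟨n * (2 * cosh r0) ^ (2 * n), by positivity, ?_⟩
  intro r hr hrr0 u hu hu_le hconstraint
  have : IsFiniteMeasure
      (μH[2 * (n : ℝ) - 1].restrict (sphere (0 : EuclideanSpace ℝ (Fin (2 * n))) 1)) := by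
    have hS := hausdorffMeasure_sphere_lt_top (E := EuclideanSpace ℝ (Fin (2 * n)))
    rw [finrank_euclideanSpace_fin, Nat.cast_mul, Nat.cast_ofNat] at hS
    exact isFiniteMeasure_restrict.mpr hS.ne
  have hc : 0 < r * sinh (r / 2) ^ (2 * n) := by
    have := sinh_pos_iff.mpr (half_pos hr); positivity
  have hF : Continuous fun t => ∫ s in 0..r * (1 + t), sinh (s / 2) ^ (2 * n) :=
    (continuous_iff_continuousAt.mpr fun x =>
      (hasDerivAt_integral_sinh_pow _ x).continuousAt).comp (by fun_prop)
  have key := abs_mul_norm_integral_smul_le (φ := fun w => w) aestronglyMeasurable_id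
    (ae_restrict_of_forall_mem isClosed_sphere.measurableSet fun w hw =>
      (mem_sphere_zero_iff_norm.mp hw).le)
    (integral_sphere_id_eq_zero _ _) hu
    (ae_restrict_of_forall_mem isClosed_sphere.measurableSet hu_le)
    hF.measurable (fun t ht => by simpa using abs_integral_sinh_pow_sub_le_mul (2 * n) hr hrr0 ht)
    (by simpa only [mul_integral_sinh_pow_mul] using hconstraint)
  rw [abs_of_pos hc] at key
  exact le_of_mul_le_mul_left (by linarith [key]) hc

/-- Consequence of the barycenter constraint: the first-order spherical harmonic
coefficients of `u` are quadratically small in `u`. -/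
theorem barycenter_constraint_bound (n : ℕ) (hn : 1 ≤ n) (r0 : ℝ) (hr0 : 0 < r0) :
    ∃ C : ℝ, 0 ≤ C ∧
      ∀ r : ℝ, 0 < r → r ≤ r0 →
      ∀ u : EuclideanSpace ℝ (Fin (2 * n)) → ℝ,
        Measurable u →
        (∀ w ∈ Metric.sphere (0 : EuclideanSpace ℝ (Fin (2 * n))) 1, |u w| ≤ 1 / 2) →
        (∫ w in Metric.sphere (0 : EuclideanSpace ℝ (Fin (2 * n))) 1,
            ((1 + u w) * ∫ ρ in (0:ℝ)..r, Real.sinh (ρ * (1 + u w) / 2) ^ (2 * n)) • w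
            ∂μH[2 * (n : ℝ) - 1]
          = (0 : EuclideanSpace ℝ (Fin (2 * n)))) →
        ‖∫ w in Metric.sphere (0 : EuclideanSpace ℝ (Fin (2 * n))) 1, u w • w
            ∂μH[2 * (n : ℝ) - 1]‖
          ≤ C * ∫ w in Metric.sphere (0 : EuclideanSpace ℝ (Fin (2 * n))) 1, (u w) ^ 2
              ∂μH[2 * (n : ℝ) - 1] :=
  barycenter_constraint_bound_general n r0
end

section
/- For every r0 > 0 there exists a constant C >= 0, depending only on r0, such that for all r in (0, r0] and all u in [-1/2, 1/2]: | M(u) - r (1 + 2 cosh(r)) csch(r) * u - (1/4) r^2 ( 4 cosh(r) - 1 ) csch^2(r/2) * u^2 | <= C * |u|^3, where M(u) = ( sinh( r(1+u)/2 ) / sinh(r/2) )^2 * ( sinh( r(1+u) ) / sinh(r) ) - 1. -/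
open Real Finset

/-! With `a = exp (r / 2)` and `b = exp (r u / 2)` every hyperbolic function in sight becomes a
Laurent polynomial in `a, b`, and the remainder of the expansion turns out to be a combination of
the Taylor remainders `cosh z - 1 - z² / 2` and `sinh z - z` at `z = r u` and `z = 2 r u`, with
coefficients polynomial in `coth (r / 2)` and `coth r`. Since `x coth x ≤ eˣ`, those coefficients
are `O(r⁻³)`, while the Taylor remainders are `O(|r u|³)`, uniformly for `r ≤ r0`. -/

theorem Real.abs_exp_sub_sum_range_le (x : ℝ) (n : ℕ) :
    |exp x - ∑ m ∈ range n, x ^ m / m.factorial| ≤ |x| ^ n * exp |x| := by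
  have h := Complex.norm_exp_sub_sum_le_norm_mul_exp x n
  rw [← Complex.ofReal_exp] at h
  exact_mod_cast h

theorem Real.abs_exp_sub_one_sub_id_sub_sq_le (x : ℝ) :
    |exp x - 1 - x - x ^ 2 / 2| ≤ |x| ^ 3 * exp |x| := by
  have h := abs_exp_sub_sum_range_le x 3
  norm_num [sum_range_succ] at h
  convert h using 2
  ring

theorem Real.abs_sinh_sub_self_le (x : ℝ) : |sinh x - x| ≤ |x| ^ 3 * exp |x| := by
  have hp := abs_le.1 (abs_exp_sub_one_sub_id_sub_sq_le x)
  have hn := abs_le.1 (abs_exp_sub_one_sub_id_sub_sq_le (-x))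
  rw [abs_neg] at hn
  rw [sinh_eq, abs_le]
  constructor <;> linarith [hp.1, hp.2, hn.1, hn.2]

theorem Real.abs_cosh_sub_one_sub_sq_le (x : ℝ) :
    |cosh x - 1 - x ^ 2 / 2| ≤ |x| ^ 3 * exp |x| := by
  have hp := abs_le.1 (abs_exp_sub_one_sub_id_sub_sq_le x)
  have hn := abs_le.1 (abs_exp_sub_one_sub_id_sub_sq_le (-x))
  rw [abs_neg] at hn
  rw [cosh_eq, abs_le]
  constructor <;> linarith [hp.1, hp.2, hn.1, hn.2]

theorem Real.cosh_div_sinh_le_exp_div {x : ℝ} (hx : 0 < x) : cosh x / sinh x ≤ exp x / x := by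
  have hcosh : cosh x ≤ exp x := by
    rw [cosh_eq]; linarith [exp_le_exp.2 (show -x ≤ x by linarith)]
  exact div_le_div₀ (exp_pos x).le hcosh hx (self_le_sinh_iff.2 hx.le)

noncomputable def perimeterRatioRemainder (A B y : ℝ) : ℝ :=
  (1 - A ^ 2) / 2 * (cosh y - 1 - y ^ 2 / 2)
    + B * (1 - A ^ 2) / 2 * (sinh y - y)
    + ((1 + A ^ 2) / 4 + A * B / 2) * (cosh (2 * y) - 1 - (2 * y) ^ 2 / 2)
    + (B * (1 + A ^ 2) / 4 + A / 2) * (sinh (2 * y) - 2 * y)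

theorem perimeterRatio_sub_taylor_eq (r u : ℝ) (hr : r ≠ 0) :
    ((sinh (r * (1 + u) / 2) / sinh (r / 2)) ^ 2 * (sinh (r * (1 + u)) / sinh r) - 1)
        - r * (1 + 2 * cosh r) * (1 / sinh r) * u
        - (1 / 4) * r ^ 2 * (4 * cosh r - 1) * (1 / sinh (r / 2) ^ 2) * u ^ 2
      = perimeterRatioRemainder (cosh (r / 2) / sinh (r / 2)) (cosh r / sinh r) (r * u) := by
  have hexp : ∀ (m n : ℕ) (z : ℝ), z = m * (r / 2) + n * (r * u / 2) →
      exp z = exp (r / 2) ^ m * exp (r * u / 2) ^ n := by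
    rintro m n z rfl
    rw [exp_add, exp_nat_mul, exp_nat_mul]
  have ha₁ : exp (r / 2) ≠ 1 := by rw [Ne, exp_eq_one_iff]; contrapose! hr; linarith
  unfold perimeterRatioRemainder
  simp only [sinh_eq, cosh_eq, exp_neg]
  rw [hexp 2 0 r (by push_cast; ring), hexp 1 1 (r * (1 + u) / 2) (by push_cast; ring),
    hexp 2 2 (r * (1 + u)) (by push_cast; ring), hexp 0 2 (r * u) (by push_cast; ring),
    hexp 0 4 (2 * (r * u)) (by push_cast; ring)]
  have ha₀ := exp_pos (r / 2)
  have hb₀ := exp_pos (r * u / 2)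
  generalize exp (r / 2) = a at *
  generalize exp (r * u / 2) = b at *
  have h₂ : a ^ 2 - 1 ≠ 0 :=
    sub_ne_zero.2 ((pow_eq_one_iff_of_nonneg ha₀.le two_ne_zero).not.2 ha₁)
  have h₄ : a ^ 4 - 1 ≠ 0 :=
    sub_ne_zero.2 ((pow_eq_one_iff_of_nonneg ha₀.le four_ne_zero).not.2 ha₁)
  field_simp
  ring

theorem abs_perimeterRatioRemainder_le {A B P : ℝ} (hA₀ : 0 ≤ A) (hA : A ≤ P) (hB₀ : 0 ≤ B)
    (hB : B ≤ P) (hP : 1 ≤ P) (y : ℝ) :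
    |perimeterRatioRemainder A B y| ≤ 32 * P ^ 3 * |y| ^ 3 * exp (2 * |y|) := by
  have hP₀ : 0 ≤ P := hA₀.trans hA
  have hA2 : A ^ 2 ≤ P ^ 2 := pow_le_pow_left₀ hA₀ hA 2
  have hA2₀ : 0 ≤ A ^ 2 := sq_nonneg A
  have hAB : A * B ≤ P ^ 2 := (mul_le_mul hA hB hB₀ hP₀).trans_eq (sq P).symm
  have hBA2 : B * A ^ 2 ≤ P ^ 3 := (mul_le_mul hB hA2 hA2₀ hP₀).trans_eq (by ring)
  have hP2 : P ^ 2 ≤ P ^ 3 := pow_le_pow_right₀ hP (by norm_num)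
  have hP1 : P ≤ P ^ 3 := le_self_pow₀ hP (by norm_num)
  have hAB₀ : 0 ≤ A * B := mul_nonneg hA₀ hB₀
  have hBA2₀ : 0 ≤ B * A ^ 2 := mul_nonneg hB₀ hA2₀
  have hc₁ : |(1 - A ^ 2) / 2| ≤ P ^ 3 := by rw [abs_le]; constructor <;> linarith
  have hc₂ : |B * (1 - A ^ 2) / 2| ≤ P ^ 3 := by rw [abs_le]; constructor <;> linarith
  have hc₃ : |(1 + A ^ 2) / 4 + A * B / 2| ≤ P ^ 3 := by rw [abs_le]; constructor <;> linarith
  have hc₄ : |B * (1 + A ^ 2) / 4 + A / 2| ≤ P ^ 3 := by rw [abs_le]; constructor <;> linarith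
  set R := 8 * |y| ^ 3 * exp (2 * |y|)
  have hR : ∀ x, |x| ≤ 2 * |y| → |x| ^ 3 * exp |x| ≤ R := fun x hx => by
    calc |x| ^ 3 * exp |x| ≤ (2 * |y|) ^ 3 * exp (2 * |y|) := by gcongr
      _ = R := by ring
  have hy : |y| ≤ 2 * |y| := by linarith [abs_nonneg y]
  have h2y : |2 * y| ≤ 2 * |y| := by rw [abs_mul, abs_two]
  unfold perimeterRatioRemainder
  calc _ ≤ P ^ 3 * R + P ^ 3 * R + P ^ 3 * R + P ^ 3 * R := by
        refine (abs_add_le _ _).trans (add_le_add ((abs_add_le _ _).trans (add_le_add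
          ((abs_add_le _ _).trans (add_le_add ?_ ?_)) ?_)) ?_) <;> rw [abs_mul] <;> gcongr
        · exact (abs_cosh_sub_one_sub_sq_le y).trans (hR y hy)
        · exact (abs_sinh_sub_self_le y).trans (hR y hy)
        · exact (abs_cosh_sub_one_sub_sq_le _).trans (hR _ h2y)
        · exact (abs_sinh_sub_self_le _).trans (hR _ h2y)
    _ = 32 * P ^ 3 * |y| ^ 3 * exp (2 * |y|) := by ring

theorem M_taylor_expansion_general (r0 : ℝ) :
    ∃ C : ℝ, 0 ≤ C ∧
      ∀ r : ℝ, 0 < r → r ≤ r0 →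
      ∀ u : ℝ, -(1/2) ≤ u → u ≤ 1/2 →
        |((Real.sinh (r * (1 + u) / 2) / Real.sinh (r / 2)) ^ 2
              * (Real.sinh (r * (1 + u)) / Real.sinh r) - 1)
            - r * (1 + 2 * Real.cosh r) * (1 / Real.sinh r) * u
            - (1 / 4) * r ^ 2 * (4 * Real.cosh r - 1) * (1 / Real.sinh (r / 2) ^ 2) * u ^ 2|
          ≤ C * |u| ^ 3 := by
  refine ⟨256 * exp r0 ^ 4, by positivity, fun r hr hrr0 u hu₁ hu₂ => ?_⟩
  have hu : 2 * |u| ≤ 1 := by rw [← abs_two, ← abs_mul, abs_le]; constructor <;> linarith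
  set P := 2 * exp r0 / r with hP_def
  have hcoth : ∀ x, r / 2 ≤ x → x ≤ r → 0 ≤ cosh x / sinh x ∧ cosh x / sinh x ≤ P := by
    intro x hx hxr
    have hx₀ : 0 < x := by linarith
    refine ⟨div_nonneg (cosh_pos x).le (sinh_pos_iff.2 hx₀).le, ?_⟩
    calc cosh x / sinh x ≤ exp x / x := cosh_div_sinh_le_exp_div hx₀
      _ ≤ exp r0 / (r / 2) := div_le_div₀ (exp_pos _).le (exp_le_exp.2 (by linarith))
          (half_pos hr) hx
      _ = P := by ring
  have hP : 1 ≤ P := by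
    rw [le_div_iff₀ hr]; linarith [add_one_le_exp r0]
  obtain ⟨hA₀, hA⟩ := hcoth (r / 2) le_rfl (half_le_self hr.le)
  obtain ⟨hB₀, hB⟩ := hcoth r (half_le_self hr.le) le_rfl
  rw [perimeterRatio_sub_taylor_eq r u hr.ne']
  calc _ ≤ 32 * P ^ 3 * |r * u| ^ 3 * exp (2 * |r * u|) :=
        abs_perimeterRatioRemainder_le hA₀ hA hB₀ hB hP (r * u)
    _ = 256 * exp r0 ^ 3 * exp (r * (2 * |u|)) * |u| ^ 3 := by
        rw [abs_mul, abs_of_pos hr, hP_def]; field_simp; ring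
    _ ≤ 256 * exp r0 ^ 3 * exp r0 * |u| ^ 3 := by
        gcongr; nlinarith
    _ = 256 * exp r0 ^ 4 * |u| ^ 3 := by ring

/-- Second-order Taylor expansion with uniformly controlled remainder of the ratio
`M(u) + 1` of Bergman perimeter densities. -/
theorem M_taylor_expansion (r0 : ℝ) (hr0 : 0 < r0) :
    ∃ C : ℝ, 0 ≤ C ∧
      ∀ r : ℝ, 0 < r → r ≤ r0 →
      ∀ u : ℝ, -(1/2) ≤ u → u ≤ 1/2 →
        |((Real.sinh (r * (1 + u) / 2) / Real.sinh (r / 2)) ^ 2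
              * (Real.sinh (r * (1 + u)) / Real.sinh r) - 1)
            - r * (1 + 2 * Real.cosh r) * (1 / Real.sinh r) * u
            - (1 / 4) * r ^ 2 * (4 * Real.cosh r - 1) * (1 / Real.sinh (r / 2) ^ 2) * u ^ 2|
          ≤ C * |u| ^ 3 :=
  M_taylor_expansion_general r0
end

section
/- For every r0 > 0 there exists a constant C7 >= 0, depending only on r0, such that for all r in (0, r0], all eps0 in (0, 1/2], and all u in [-eps0, eps0]: ( sinh( r(1+u)/2 ) / sinh(r/2) )^2 * ( sinh( r(1+u) ) / sinh(r) ) >= 1 - C7 * eps0. -/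
/-!
Write `s = 1 + u`. For `s ≥ 1` both ratios `sinh (x s) / sinh x` (with `x = r / 2` and `x = r`)
are at least `1`. For `s < 1` the mean value theorem and `x ≤ sinh x` give
`sinh x - sinh (x s) ≤ (1 - s) x cosh x ≤ (1 - s) sinh x cosh r0`, so each ratio is at least
`1 - eps0 * cosh r0`, and a product of three such factors is at least `1 - 3 eps0 * cosh r0`.
-/

open Real

namespace Real

lemma sinh_sub_sinh_le_mul_cosh {b x : ℝ} (hbx : |b| ≤ x) :
    sinh x - sinh b ≤ cosh x * (x - b) := by
  have hcosh : ∀ y ∈ interior (Set.Icc (-x) x), deriv sinh y ≤ cosh x := by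
    intro y hy
    rw [interior_Icc] at hy
    rw [deriv_sinh, cosh_le_cosh, abs_of_nonneg ((abs_nonneg b).trans hbx)]
    exact abs_le.2 ⟨hy.1.le, hy.2.le⟩
  exact (convex_Icc (-x) x).image_sub_le_mul_sub_of_deriv_le continuous_sinh.continuousOn
    differentiable_sinh.differentiableOn hcosh b (abs_le.1 hbx) x
    ⟨by linarith [abs_le.1 hbx], le_rfl⟩ (le_abs_self b |>.trans hbx)

lemma one_sub_mul_cosh_le_sinh_mul_div_sinh {x s : ℝ} (hx : 0 < x) (hs₀ : 0 ≤ s)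
    (hs₁ : s ≤ 1) :
    1 - (1 - s) * cosh x ≤ sinh (x * s) / sinh x := by
  have hsinh : 0 < sinh x := sinh_pos_iff.2 hx
  have hxs : |x * s| ≤ x := by
    rw [abs_of_nonneg (by positivity)]
    exact mul_le_of_le_one_right hx.le hs₁
  rw [le_div_iff₀ hsinh]
  calc (1 - (1 - s) * cosh x) * sinh x
      = sinh x - (1 - s) * sinh x * cosh x := by ring
    _ ≤ sinh x - (x - x * s) * cosh x := by
        have hgap : x - x * s ≤ (1 - s) * sinh x := by
          rw [← mul_one_sub, mul_comm]
          exact mul_le_mul_of_nonneg_left (self_le_sinh_iff.2 hx.le) (by linarith)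
        linarith [mul_le_mul_of_nonneg_right hgap (cosh_pos x).le]
    _ ≤ sinh (x * s) := by linarith [sinh_sub_sinh_le_mul_cosh hxs]

lemma one_sub_mul_cosh_le_sinh_mul_div_sinh_of_le {x R s ε : ℝ} (hx : 0 < x) (hxR : x ≤ R)
    (hs₀ : 0 ≤ s) (hsε : 1 - ε ≤ s) (hε : 0 ≤ ε) :
    1 - ε * cosh R ≤ sinh (x * s) / sinh x := by
  have hsinh : 0 < sinh x := sinh_pos_iff.2 hx
  rcases le_total 1 s with hs₁ | hs₁
  · have : 1 ≤ sinh (x * s) / sinh x :=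
      (one_le_div hsinh).2 (sinh_le_sinh.2 (le_mul_of_one_le_right hx.le hs₁))
    nlinarith [one_le_cosh R]
  · have hcosh : cosh x ≤ cosh R := by
      rw [cosh_le_cosh, abs_of_pos hx, abs_of_pos (hx.trans_le hxR)]
      exact hxR
    calc 1 - ε * cosh R ≤ 1 - (1 - s) * cosh x := by
          nlinarith [cosh_pos x, mul_le_mul_of_nonneg_left hcosh hε]
      _ ≤ sinh (x * s) / sinh x := one_sub_mul_cosh_le_sinh_mul_div_sinh hx hs₀ hs₁

end Real

lemma one_sub_three_mul_le_sq_mul {a c δ : ℝ} (hc₀ : 0 ≤ c) (ha : 1 - δ ≤ a)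
    (hc : 1 - δ ≤ c) :
    1 - 3 * δ ≤ a ^ 2 * c := by
  rcases le_total δ 1 with hδ₁ | hδ₁
  · calc 1 - 3 * δ ≤ (1 - δ) ^ 3 := by nlinarith [sq_nonneg δ]
      _ = (1 - δ) ^ 2 * (1 - δ) := by ring
      _ ≤ a ^ 2 * c := by gcongr
  · nlinarith [mul_nonneg (sq_nonneg a) hc₀]

theorem density_ratio_lower_bound_general (r0 : ℝ) :
    ∃ C7 : ℝ, 0 ≤ C7 ∧
      ∀ r : ℝ, 0 < r → r ≤ r0 →
      ∀ eps0 : ℝ, 0 < eps0 → eps0 ≤ 1 / 2 →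
      ∀ u : ℝ, -eps0 ≤ u → u ≤ eps0 →
        (Real.sinh (r * (1 + u) / 2) / Real.sinh (r / 2)) ^ 2
            * (Real.sinh (r * (1 + u)) / Real.sinh r)
          ≥ 1 - C7 * eps0 := by
  refine ⟨3 * cosh r0, by positivity, ?_⟩
  intro r hr hrr0 eps0 hε hε₂ u hu _
  have hs₀ : 0 ≤ 1 + u := by linarith
  have hsε : 1 - eps0 ≤ 1 + u := by linarith
  have half := one_sub_mul_cosh_le_sinh_mul_div_sinh_of_le (half_pos hr)
    ((half_le_self hr.le).trans hrr0) hs₀ hsε hε.le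
  have full := one_sub_mul_cosh_le_sinh_mul_div_sinh_of_le hr hrr0 hs₀ hsε hε.le
  rw [← mul_div_right_comm] at half
  have hfull₀ : 0 ≤ sinh (r * (1 + u)) / sinh r :=
    div_nonneg (sinh_nonneg_iff.2 (by positivity)) (sinh_pos_iff.2 hr).le
  have := one_sub_three_mul_le_sq_mul hfull₀ half full
  linarith

/-- Uniform lower bound on the ratio of Bergman perimeter densities. -/
theorem density_ratio_lower_bound (r0 : ℝ) (hr0 : 0 < r0) :
    ∃ C7 : ℝ, 0 ≤ C7 ∧
      ∀ r : ℝ, 0 < r → r ≤ r0 →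
      ∀ eps0 : ℝ, 0 < eps0 → eps0 ≤ 1 / 2 →
      ∀ u : ℝ, -eps0 ≤ u → u ≤ eps0 →
        (Real.sinh (r * (1 + u) / 2) / Real.sinh (r / 2)) ^ 2
            * (Real.sinh (r * (1 + u)) / Real.sinh r)
          ≥ 1 - C7 * eps0 :=
  density_ratio_lower_bound_general r0
end
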